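/- Let n customers each independently generate a t-deep history via the Markov chain determined by their own monotone partiality strategy and a common product quality q. Then for every integer x, the probability that the total consumption Σ_{j=1}^{n} con(Z_j) is at least x is a non-decreasing function of q ∈ [0,1]. -/

import Mathlib

/-- Round outcomes: success, no consumption, failure. -/
inductive Ev : Type
  | S : Ev
  | N : Ev
  | F : Ev
deriving DecidableEq

instance instFintypeEv : Fintype Ev :=
  ⟨{Ev.S, Ev.N, Ev.F}, fun x => by cases x <;> simp⟩

/-- A history is a finite sequence of round outcomes. -/
abbrev Hist := List Ev

/-- The digest of a history: the subsequence of non-`N` entries. -/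
def dig (Z : Hist) : Hist := Z.filter (fun v => v ≠ Ev.N)

/-- Consumption: the number of non-`N` entries. -/
def con (Z : Hist) : ℕ := (dig Z).length

/-- Number of successes. -/
def Scount (Z : Hist) : ℕ := (Z.filter (fun v => v = Ev.S)).length

/-- Number of failures. -/
def Fcount (Z : Hist) : ℕ := (Z.filter (fun v => v = Ev.F)).length

/-- `Superior Z1 Z2` : equal depth, equal consumption, and no digest index
where `Z1` has `F` while `Z2` has `S`. -/
def Superior (Z1 Z2 : Hist) : Prop :=
  Z1.length = Z2.length ∧ con Z1 = con Z2 ∧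
    ∀ i : ℕ, ¬ ((dig Z1)[i]? = some Ev.F ∧ (dig Z2)[i]? = some Ev.S)

/-- Helper for the ex-ante function: current prefix, remaining events. -/
def exAnteFrom (σ : Hist → ℝ) : Hist → Hist → ℝ
  | _, [] => 1
  | pre, v :: rest =>
      (if v = Ev.N then 1 - σ pre else σ pre) * exAnteFrom σ (pre ++ [v]) rest

/-- The ex-ante function `c` of a partiality strategy `σ`:
`c(empty)=1`, `c(ZV)=σ(Z)c(Z)` for `V∈{S,F}`, `c(ZN)=(1-σ(Z))c(Z)`. -/
def exAnte (σ : Hist → ℝ) (Z : Hist) : ℝ := exAnteFrom σ [] Z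

/-- Probability of a full history under the Markov chain with quality `q`. -/
def histProb (σ : Hist → ℝ) (q : ℝ) (Z : Hist) : ℝ :=
  exAnte σ Z * q ^ Scount Z * (1 - q) ^ Fcount Z

/-- A strategy takes values in `[0,1]`. -/
def ValidStrat (σ : Hist → ℝ) : Prop := ∀ Z, σ Z ∈ Set.Icc (0 : ℝ) 1

/-- A monotone partiality strategy. -/
def MonotoneStrat (σ : Hist → ℝ) : Prop :=
  ∀ Z1 Z2, Superior Z1 Z2 → σ Z2 ≤ σ Z1

/- ### auxiliary lemmas -/


lemma dig_append_N (Z : Hist) : dig (Z ++ [Ev.N]) = dig Z := by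
  simp [dig]

lemma dig_append_S (Z : Hist) : dig (Z ++ [Ev.S]) = dig Z ++ [Ev.S] := by
  simp [dig]

lemma dig_append_F (Z : Hist) : dig (Z ++ [Ev.F]) = dig Z ++ [Ev.F] := by
  simp [dig]

lemma con_append_N (Z : Hist) : con (Z ++ [Ev.N]) = con Z := by
  simp [con, dig_append_N]

lemma con_append_S (Z : Hist) : con (Z ++ [Ev.S]) = con Z + 1 := by
  simp [con, dig_append_S]

lemma con_append_F (Z : Hist) : con (Z ++ [Ev.F]) = con Z + 1 := by
  simp [con, dig_append_F]

/- ### the coin chain -/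

def chainE (σ : Hist → ℝ) (q : ℝ) (φ : ℕ → ℝ) : ℕ → Hist → ℝ
  | 0, Z => φ (con Z)
  | k+1, Z => σ Z * (q * chainE σ q φ k (Z ++ [Ev.S]) + (1-q) * chainE σ q φ k (Z ++ [Ev.F]))
      + (1 - σ Z) * chainE σ q φ k (Z ++ [Ev.N])

def coinE (σ : Hist → ℝ) (φ : ℕ → ℝ) (D : ℕ → Bool) : ℕ → Hist → ℝ
  | 0, Z => φ (con Z)
  | k+1, Z => σ Z * coinE σ φ D k (Z ++ [if D (con Z) then Ev.S else Ev.F])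
      + (1 - σ Z) * coinE σ φ D k (Z ++ [Ev.N])

/-- coinE only reads the destiny at indices ≥ con Z. -/
lemma coinE_congr (σ : Hist → ℝ) (φ : ℕ → ℝ) (D D' : ℕ → Bool) :
    ∀ (k : ℕ) (Z : Hist), (∀ m, con Z ≤ m → D m = D' m) →
      coinE σ φ D k Z = coinE σ φ D' k Z := by
  intro k
  induction k with
  | zero => intro Z _; rfl
  | succ k ih =>
    intro Z h
    have hc : D (con Z) = D' (con Z) := h _ le_rfl
    simp only [coinE, hc]
    rw [ih (Z ++ [if D' (con Z) then Ev.S else Ev.F]) ?h1, ih (Z ++ [Ev.N]) ?h2]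
    case h1 =>
      intro m hm
      apply h
      rcases hb : D' (con Z) with _ | _ <;> simp only [hb] at hm <;>
        simp only [if_true, if_false, Bool.false_eq_true, con_append_S, con_append_F] at hm <;>
        omega
    case h2 =>
      intro m hm
      exact h m (by rwa [con_append_N] at hm)

def Compat (D : ℕ → Bool) (Z : Hist) : Prop :=
  dig Z = (List.range (con Z)).map (fun m => if D m then Ev.S else Ev.F)

lemma compat_nil (D : ℕ → Bool) : Compat D [] := by
  simp [Compat, dig, con]

lemma compat_append_N {D : ℕ → Bool} {Z : Hist} (h : Compat D Z) : Compat D (Z ++ [Ev.N]) := by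
  unfold Compat at *
  rw [dig_append_N, con_append_N]; exact h

lemma compat_append_coin {D : ℕ → Bool} {Z : Hist} (h : Compat D Z) :
    Compat D (Z ++ [if D (con Z) then Ev.S else Ev.F]) := by
  unfold Compat at *
  rcases hD : D (con Z) with _ | _ <;>
      simp only [hD, if_false, if_true, Bool.false_eq_true]
  · rw [dig_append_F, con_append_F, List.range_succ, List.map_append, ← h]
    simp [hD]
  · rw [dig_append_S, con_append_S, List.range_succ, List.map_append, ← h]
    simp [hD]

lemma con_append_coin (Z : Hist) (b : Bool) :
    con (Z ++ [if b then Ev.S else Ev.F]) = con Z + 1 := by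
  cases b <;> simp [con_append_S, con_append_F]

lemma compat_dig_get {D : ℕ → Bool} {Z : Hist} (h : Compat D Z) (i : ℕ) (hi : i < con Z) :
    (dig Z)[i]? = some (if D i then Ev.S else Ev.F) := by
  rw [h, List.getElem?_map, List.getElem?_range hi, Option.map_some]

lemma superior_of_compat {D1 D2 : ℕ → Bool} {Z1 Z2 : Hist}
    (h1 : Compat D1 Z1) (h2 : Compat D2 Z2)
    (hD : ∀ m, D1 m = true → D2 m = true)
    (hlen : Z2.length = Z1.length) (hcon : con Z2 = con Z1) :
    Superior Z2 Z1 := by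
  refine ⟨hlen, hcon, ?_⟩
  rintro i ⟨hF, hS⟩
  by_cases hlt : i < con Z1
  · rw [compat_dig_get h1 i hlt] at hS
    rw [compat_dig_get h2 i (by omega)] at hF
    rcases hd : D1 i with _ | _
    · simp [hd] at hS
    · simp [hD i hd] at hF
  · rw [h1, List.getElem?_map, List.getElem?_eq_none (by simpa using not_lt.mp hlt)] at hS
    simp at hS

lemma coinE_mono {σ : Hist → ℝ} (hval : ValidStrat σ) (hmono : MonotoneStrat σ)
    {φ : ℕ → ℝ} (hφ : Monotone φ) :
    ∀ (k : ℕ) (Z1 Z2 : Hist) (D1 D2 : ℕ → Bool), Z1.length = Z2.length →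
      Compat D1 Z1 → Compat D2 Z2 → (∀ m, D1 m = true → D2 m = true) →
      con Z1 ≤ con Z2 → coinE σ φ D1 k Z1 ≤ coinE σ φ D2 k Z2 := by
  intro k
  induction k with
  | zero => intro Z1 Z2 D1 D2 _ _ _ _ hcon; exact hφ hcon
  | succ k ih =>
    intro Z1 Z2 D1 D2 hlen hc1 hc2 hD hcon
    obtain ⟨hσ1a, hσ1b⟩ := hval Z1
    obtain ⟨hσ2a, hσ2b⟩ := hval Z2
    simp only [coinE]
    have hlen1 : ∀ v w : Ev, (Z1 ++ [v]).length = (Z2 ++ [w]).length := by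
      intro v w; simp [hlen]
    have hA : coinE σ φ D1 k (Z1 ++ [if D1 (con Z1) then Ev.S else Ev.F]) ≤
        coinE σ φ D2 k (Z2 ++ [if D2 (con Z2) then Ev.S else Ev.F]) := by
      apply ih _ _ _ _ (hlen1 _ _) (compat_append_coin hc1) (compat_append_coin hc2) hD
      rw [con_append_coin, con_append_coin]; omega
    have hB : coinE σ φ D1 k (Z1 ++ [Ev.N]) ≤ coinE σ φ D2 k (Z2 ++ [Ev.N]) := by
      apply ih _ _ _ _ (hlen1 _ _) (compat_append_N hc1) (compat_append_N hc2) hD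
      rw [con_append_N, con_append_N]; exact hcon
    rcases eq_or_lt_of_le hcon with heq | hlt
    · -- equal consumption: compare strategies via superiority
      have hσ : σ Z1 ≤ σ Z2 := hmono Z2 Z1 (superior_of_compat hc1 hc2 hD hlen.symm heq.symm)
      have hBA : coinE σ φ D2 k (Z2 ++ [Ev.N]) ≤
          coinE σ φ D2 k (Z2 ++ [if D2 (con Z2) then Ev.S else Ev.F]) := by
        apply ih _ _ _ _ (by simp) (compat_append_N hc2) (compat_append_coin hc2) (fun _ h => h)
        rw [con_append_N, con_append_coin]; omega
      have e1 : σ Z1 * (coinE σ φ D2 k (Z2 ++ [if D2 (con Z2) then Ev.S else Ev.F])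
          - coinE σ φ D1 k (Z1 ++ [if D1 (con Z1) then Ev.S else Ev.F])) ≥ 0 :=
        mul_nonneg hσ1a (by linarith)
      have e2 : (1 - σ Z1) * (coinE σ φ D2 k (Z2 ++ [Ev.N])
          - coinE σ φ D1 k (Z1 ++ [Ev.N])) ≥ 0 := mul_nonneg (by linarith) (by linarith)
      have e3 : (σ Z2 - σ Z1) * (coinE σ φ D2 k (Z2 ++ [if D2 (con Z2) then Ev.S else Ev.F])
          - coinE σ φ D2 k (Z2 ++ [Ev.N])) ≥ 0 := mul_nonneg (by linarith) (by linarith)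
      nlinarith [e1, e2, e3]
    · -- strictly fewer consumptions on the left
      have hAB : coinE σ φ D1 k (Z1 ++ [if D1 (con Z1) then Ev.S else Ev.F]) ≤
          coinE σ φ D2 k (Z2 ++ [Ev.N]) := by
        apply ih _ _ _ _ (hlen1 _ _) (compat_append_coin hc1) (compat_append_N hc2) hD
        rw [con_append_coin, con_append_N]; omega
      have hBA : coinE σ φ D1 k (Z1 ++ [Ev.N]) ≤
          coinE σ φ D2 k (Z2 ++ [if D2 (con Z2) then Ev.S else Ev.F]) := by
        apply ih _ _ _ _ (hlen1 _ _) (compat_append_N hc1) (compat_append_coin hc2) hD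
        rw [con_append_N, con_append_coin]; omega
      set A1 := coinE σ φ D1 k (Z1 ++ [if D1 (con Z1) then Ev.S else Ev.F])
      set B1 := coinE σ φ D1 k (Z1 ++ [Ev.N])
      set A2 := coinE σ φ D2 k (Z2 ++ [if D2 (con Z2) then Ev.S else Ev.F])
      set B2 := coinE σ φ D2 k (Z2 ++ [Ev.N])
      have hX1 : A1 ≤ σ Z2 * A2 + (1 - σ Z2) * B2 := by
        nlinarith [mul_nonneg hσ2a (sub_nonneg.2 hA), mul_nonneg (by linarith : (0:ℝ) ≤ 1 - σ Z2)
          (sub_nonneg.2 hAB)]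
      have hX2 : B1 ≤ σ Z2 * A2 + (1 - σ Z2) * B2 := by
        nlinarith [mul_nonneg hσ2a (sub_nonneg.2 hBA), mul_nonneg (by linarith : (0:ℝ) ≤ 1 - σ Z2)
          (sub_nonneg.2 hB)]
      nlinarith [mul_nonneg hσ1a (sub_nonneg.2 hX1),
        mul_nonneg (by linarith : (0:ℝ) ≤ 1 - σ Z1) (sub_nonneg.2 hX2)]

lemma sum_pi_succ {α : Type*} [Fintype α] {M : Type*} [AddCommMonoid M] (k : ℕ)
    (f : (Fin (k+1) → α) → M) :
    ∑ z : Fin (k+1) → α, f z = ∑ v : α, ∑ w : Fin k → α, f (Fin.cons v w) := by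
  rw [← (Fin.consEquiv (fun _ : Fin (k+1) => α)).sum_comp f, Fintype.sum_prod_type]
  rfl

lemma sum_ev (g : Ev → ℝ) : ∑ v : Ev, g v = g Ev.S + g Ev.N + g Ev.F := by
  rw [show (Finset.univ : Finset Ev) = {Ev.S, Ev.N, Ev.F} by decide]
  simp [Finset.sum_insert, Finset.mem_insert]
  ring

lemma chainE_eq_sum (σ : Hist → ℝ) (q : ℝ) (φ : ℕ → ℝ) :
    ∀ (k : ℕ) (pre : Hist),
      ∑ z : Fin k → Ev, φ (con (pre ++ List.ofFn z)) *
        (exAnteFrom σ pre (List.ofFn z) * q ^ Scount (List.ofFn z) *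
          (1-q) ^ Fcount (List.ofFn z))
      = chainE σ q φ k pre := by
  intro k
  induction k with
  | zero =>
    intro pre
    simp only [List.ofFn_zero, List.append_nil]
    rw [Finset.sum_const]
    simp [Scount, Fcount, exAnteFrom, chainE, Finset.card_univ, Fintype.card_pi]
  | succ k ih =>
    intro pre
    rw [sum_pi_succ]
    have hchg : ∀ v : Ev, ∑ w : Fin k → Ev,
        φ (con (pre ++ List.ofFn (Fin.cons v w))) *
          (exAnteFrom σ pre (List.ofFn (Fin.cons v w)) * q ^ Scount (List.ofFn (Fin.cons v w)) *
            (1-q) ^ Fcount (List.ofFn (Fin.cons v w)))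
        = ((if v = Ev.N then 1 - σ pre else σ pre) *
            (if v = Ev.S then q else if v = Ev.F then 1 - q else 1)) *
            chainE σ q φ k (pre ++ [v]) := by
      intro v
      rw [← ih (pre ++ [v]), Finset.mul_sum]
      apply Finset.sum_congr rfl
      intro w _
      have hofn : List.ofFn (Fin.cons v w : Fin (k+1) → Ev) = v :: List.ofFn w := by
        rw [List.ofFn_succ]
        simp
      rw [hofn, List.append_cons]
      show φ _ * ((if v = Ev.N then 1 - σ pre else σ pre) * exAnteFrom σ (pre ++ [v]) _
          * q ^ Scount (v :: List.ofFn w) * (1-q) ^ Fcount (v :: List.ofFn w)) = _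
      rcases v <;> simp [Scount, Fcount, List.filter_cons, pow_succ] <;> ring
    rw [Finset.sum_congr rfl (fun v _ => hchg v), sum_ev]
    show _ = chainE σ q φ (k+1) pre
    simp only [chainE]
    simp only [if_true, if_false, reduceCtorEq]
    ring

def ber (q : ℝ) (b : Bool) : ℝ := if b then q else 1 - q

lemma ber_nonneg {q : ℝ} (h0 : 0 ≤ q) (h1 : q ≤ 1) (b : Bool) : 0 ≤ ber q b := by
  cases b <;> simp [ber] <;> linarith

lemma berProd_nonneg {q : ℝ} (h0 : 0 ≤ q) (h1 : q ≤ 1) {T : ℕ} (W : Fin T → Bool) :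
    0 ≤ ∏ i, ber q (W i) :=
  Finset.prod_nonneg fun i _ => ber_nonneg h0 h1 _

lemma prod_ber_cons (q : ℝ) {T : ℕ} (b : Bool) (w : Fin T → Bool) :
    ∏ i, ber q ((Fin.cons b w : Fin (T+1) → Bool) i) = ber q b * ∏ i, ber q (w i) := by
  rw [Fin.prod_univ_succ]
  simp

lemma sum_ber_one (q : ℝ) : ∀ T : ℕ, ∑ W : Fin T → Bool, ∏ i, ber q (W i) = 1 := by
  intro T
  induction T with
  | zero => simp
  | succ T ih =>
    rw [sum_pi_succ]
    have h : ∀ b : Bool, ∑ w : Fin T → Bool, ∏ i, ber q ((Fin.cons b w : Fin (T+1) → Bool) i) = ber q b := by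
      intro b
      simp only [prod_ber_cons]
      rw [← Finset.mul_sum, ih, mul_one]
    rw [Finset.sum_congr rfl fun b _ => h b, Fintype.sum_bool]
    simp [ber]

lemma bern_mono : ∀ (T : ℕ) (Φ : (Fin T → Bool) → ℝ),
    (∀ W W' : Fin T → Bool, (∀ i, W i = true → W' i = true) → Φ W ≤ Φ W') →
    ∀ q q' : ℝ, 0 ≤ q → q ≤ q' → q' ≤ 1 →
      ∑ W : Fin T → Bool, (∏ i, ber q (W i)) * Φ W ≤
      ∑ W : Fin T → Bool, (∏ i, ber q' (W i)) * Φ W := by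
  intro T
  induction T with
  | zero => intro Φ _ q q' _ _ _; simp
  | succ T ih =>
    intro Φ hΦ q q' h0 hqq h1
    have h0' : 0 ≤ q' := le_trans h0 hqq
    have h1q : q ≤ 1 := le_trans hqq h1
    rw [sum_pi_succ, sum_pi_succ]
    have key : ∀ (r : ℝ) (b : Bool), ∑ w : Fin T → Bool,
        (∏ i, ber r ((Fin.cons b w : Fin (T+1) → Bool) i)) * Φ (Fin.cons b w)
        = ber r b * ∑ w : Fin T → Bool, (∏ i, ber r (w i)) * Φ (Fin.cons b w) := by
      intro r b
      rw [Finset.mul_sum]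
      apply Finset.sum_congr rfl
      intro w _
      rw [prod_ber_cons, mul_assoc]
    rw [Finset.sum_congr rfl fun b _ => key q b, Finset.sum_congr rfl fun b _ => key q' b,
      Fintype.sum_bool, Fintype.sum_bool]
    have hcons : ∀ b : Bool, ∀ w w' : Fin T → Bool, (∀ i, w i = true → w' i = true) →
        Φ (Fin.cons b w) ≤ Φ (Fin.cons b w') := by
      intro b w w' hw
      apply hΦ
      intro i
      refine Fin.cases ?_ ?_ i <;> simp [Fin.cons_zero, Fin.cons_succ]
      exact fun j => hw j
    have hT : ∑ w : Fin T → Bool, (∏ i, ber q (w i)) * Φ (Fin.cons true w) ≤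
        ∑ w : Fin T → Bool, (∏ i, ber q' (w i)) * Φ (Fin.cons true w) :=
      ih _ (hcons true) q q' h0 hqq h1
    have hF : ∑ w : Fin T → Bool, (∏ i, ber q (w i)) * Φ (Fin.cons false w) ≤
        ∑ w : Fin T → Bool, (∏ i, ber q' (w i)) * Φ (Fin.cons false w) :=
      ih _ (hcons false) q q' h0 hqq h1
    have hFT : ∑ w : Fin T → Bool, (∏ i, ber q' (w i)) * Φ (Fin.cons false w) ≤
        ∑ w : Fin T → Bool, (∏ i, ber q' (w i)) * Φ (Fin.cons true w) := by
      apply Finset.sum_le_sum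
      intro w _
      apply mul_le_mul_of_nonneg_left _ (berProd_nonneg h0' h1 w)
      apply hΦ
      intro i
      refine Fin.cases ?_ ?_ i <;> simp [Fin.cons_zero, Fin.cons_succ]
    set At := ∑ w : Fin T → Bool, (∏ i, ber q (w i)) * Φ (Fin.cons true w)
    set Af := ∑ w : Fin T → Bool, (∏ i, ber q (w i)) * Φ (Fin.cons false w)
    set Bt := ∑ w : Fin T → Bool, (∏ i, ber q' (w i)) * Φ (Fin.cons true w)
    set Bf := ∑ w : Fin T → Bool, (∏ i, ber q' (w i)) * Φ (Fin.cons false w)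
    show ber q true * At + ber q false * Af ≤ ber q' true * Bt + ber q' false * Bf
    simp only [ber, Bool.false_eq_true, Bool.true_eq_false, if_true, if_false, reduceIte]
    nlinarith [mul_le_mul_of_nonneg_left hT h0,
      mul_le_mul_of_nonneg_left hF (by linarith : (0:ℝ) ≤ 1 - q),
      mul_nonneg (by linarith : (0:ℝ) ≤ q' - q) (sub_nonneg.2 hFT)]

section Split

variable {T : ℕ} (j : Fin T)

lemma esymm_at (b : Bool) (r : {i : Fin T // i ≠ j} → Bool) :
    ((Equiv.funSplitAt j Bool).symm (b, r)) j = b := by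
  simp [Equiv.funSplitAt_symm_apply]

lemma esymm_ne (b : Bool) (r : {i : Fin T // i ≠ j} → Bool) {i : Fin T} (h : i ≠ j) :
    ((Equiv.funSplitAt j Bool).symm (b, r)) i = r ⟨i, h⟩ := by
  simp [Equiv.funSplitAt_symm_apply, h]

lemma esymm_update (b b' : Bool) (r : {i : Fin T // i ≠ j} → Bool) :
    ((Equiv.funSplitAt j Bool).symm (b, r)) =
      Function.update ((Equiv.funSplitAt j Bool).symm (b', r)) j b := by
  funext i
  by_cases h : i = j
  · subst h
    rw [Function.update_self, esymm_at]
  · rw [Function.update_of_ne h, esymm_ne j b r h, esymm_ne j b' r h]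

lemma prod_split (g : Fin T → ℝ) :
    ∏ i, g i = g j * ∏ i : {i : Fin T // i ≠ j}, g i := by
  rw [Fintype.prod_eq_mul_prod_compl j]
  congr 1
  have h := Finset.prod_subtype (p := fun i : Fin T => i ≠ j) (F := inferInstance) ({j}ᶜ)
    (fun x => by simp) g
  exact h

lemma esum (F : (Fin T → Bool) → ℝ) :
    ∑ W : Fin T → Bool, F W = ∑ b : Bool, ∑ r : {i : Fin T // i ≠ j} → Bool,
      F ((Equiv.funSplitAt j Bool).symm (b, r)) := by
  rw [← (Equiv.funSplitAt j Bool).symm.sum_comp F, Fintype.sum_prod_type]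

lemma ber_prod_split (q : ℝ) (b : Bool) (r : {i : Fin T // i ≠ j} → Bool) :
    (∏ i, ber q (((Equiv.funSplitAt j Bool).symm (b, r)) i))
      = ber q b * ∏ i : {i : Fin T // i ≠ j}, ber q (r i) := by
  rw [prod_split j]
  congr 1
  · rw [esymm_at]
  · apply Finset.prod_congr rfl
    intro i _
    rw [esymm_ne j b r i.2, Subtype.coe_eta]

lemma split_sum (q : ℝ) (A B : (Fin T → Bool) → ℝ)
    (hA : ∀ (W : Fin T → Bool) (b : Bool), A (Function.update W j b) = A W)
    (hB : ∀ (W : Fin T → Bool) (b : Bool), B (Function.update W j b) = B W) :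
    ∑ W : Fin T → Bool, (∏ i, ber q (W i)) * (if W j then A W else B W)
      = q * ∑ W : Fin T → Bool, (∏ i, ber q (W i)) * A W
        + (1-q) * ∑ W : Fin T → Bool, (∏ i, ber q (W i)) * B W := by
  classical
  set e := (Equiv.funSplitAt j Bool) with he
  have hAfix : ∀ (b : Bool) (r : {i : Fin T // i ≠ j} → Bool),
      A (e.symm (b, r)) = A (e.symm (true, r)) := by
    intro b r
    rw [esymm_update j b true r]
    exact hA _ b
  have hBfix : ∀ (b : Bool) (r : {i : Fin T // i ≠ j} → Bool),
      B (e.symm (b, r)) = B (e.symm (true, r)) := by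
    intro b r
    rw [esymm_update j b true r]
    exact hB _ b
  have hsumA : ∑ W : Fin T → Bool, (∏ i, ber q (W i)) * A W
      = ∑ r : {i : Fin T // i ≠ j} → Bool,
          (∏ i : {i : Fin T // i ≠ j}, ber q (r i)) * A (e.symm (true, r)) := by
    rw [esum j, Fintype.sum_bool]
    have h1 : ∀ b : Bool, ∑ r : {i : Fin T // i ≠ j} → Bool,
        (∏ i, ber q ((e.symm (b, r)) i)) * A (e.symm (b, r))
        = ber q b * ∑ r : {i : Fin T // i ≠ j} → Bool,
            (∏ i : {i : Fin T // i ≠ j}, ber q (r i)) * A (e.symm (true, r)) := by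
      intro b
      rw [Finset.mul_sum]
      apply Finset.sum_congr rfl
      intro r _
      rw [ber_prod_split j, hAfix b r, mul_assoc]
    rw [h1 true, h1 false]
    simp [ber]
    ring
  have hsumB : ∑ W : Fin T → Bool, (∏ i, ber q (W i)) * B W
      = ∑ r : {i : Fin T // i ≠ j} → Bool,
          (∏ i : {i : Fin T // i ≠ j}, ber q (r i)) * B (e.symm (true, r)) := by
    rw [esum j, Fintype.sum_bool]
    have h1 : ∀ b : Bool, ∑ r : {i : Fin T // i ≠ j} → Bool,
        (∏ i, ber q ((e.symm (b, r)) i)) * B (e.symm (b, r))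
        = ber q b * ∑ r : {i : Fin T // i ≠ j} → Bool,
            (∏ i : {i : Fin T // i ≠ j}, ber q (r i)) * B (e.symm (true, r)) := by
      intro b
      rw [Finset.mul_sum]
      apply Finset.sum_congr rfl
      intro r _
      rw [ber_prod_split j, hBfix b r, mul_assoc]
    rw [h1 true, h1 false]
    simp [ber]
    ring
  rw [hsumA, hsumB, esum j, Fintype.sum_bool]
  have h2 : ∀ b : Bool, ∑ r : {i : Fin T // i ≠ j} → Bool,
      (∏ i, ber q ((e.symm (b, r)) i)) *
        (if (e.symm (b, r)) j then A (e.symm (b, r)) else B (e.symm (b, r)))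
      = ber q b * ∑ r : {i : Fin T // i ≠ j} → Bool,
          (∏ i : {i : Fin T // i ≠ j}, ber q (r i)) *
            (if b then A (e.symm (true, r)) else B (e.symm (true, r))) := by
    intro b
    rw [Finset.mul_sum]
    apply Finset.sum_congr rfl
    intro r _
    rw [ber_prod_split j, esymm_at j b r, hAfix b r, hBfix b r, mul_assoc]
  rw [h2 true, h2 false]
  simp [ber, Finset.mul_sum, mul_assoc]

end Split

def Dof {T : ℕ} (W : Fin T → Bool) : ℕ → Bool := fun m => if h : m < T then W ⟨m, h⟩ else false

lemma con_nil : con ([] : Hist) = 0 := rfl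

lemma chainE_eq_coin (σ : Hist → ℝ) (φ : ℕ → ℝ) (q : ℝ) (T : ℕ) :
    ∀ (k : ℕ) (Z : Hist), con Z + k ≤ T →
      chainE σ q φ k Z = ∑ W : Fin T → Bool, (∏ i, ber q (W i)) * coinE σ φ (Dof W) k Z := by
  intro k
  induction k with
  | zero =>
    intro Z _
    show φ (con Z) = ∑ W : Fin T → Bool, (∏ i, ber q (W i)) * φ (con Z)
    rw [← Finset.sum_mul, sum_ber_one, one_mul]
  | succ k ih =>
    intro Z hZ
    have hc : con Z < T := by omega
    set j : Fin T := ⟨con Z, hc⟩ with hj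
    have hDj : ∀ W : Fin T → Bool, Dof W (con Z) = W j := by
      intro W
      simp [Dof, hc, hj]
    set A := fun W : Fin T → Bool => coinE σ φ (Dof W) k (Z ++ [Ev.S]) with hA
    set B := fun W : Fin T → Bool => coinE σ φ (Dof W) k (Z ++ [Ev.F]) with hB
    have hins : ∀ (v : Ev), con (Z ++ [v]) = con Z + 1 →
        ∀ (W : Fin T → Bool) (b : Bool),
        coinE σ φ (Dof (Function.update W j b)) k (Z ++ [v]) = coinE σ φ (Dof W) k (Z ++ [v]) := by
      intro v hv W b
      apply coinE_congr
      intro m hm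
      rw [hv] at hm
      have hne : m ≠ con Z := by omega
      by_cases h : m < T
      · show (if h' : m < T then (Function.update W j b) ⟨m, h'⟩ else false) = _
        rw [dif_pos h]
        show _ = (if h' : m < T then W ⟨m, h'⟩ else false)
        rw [dif_pos h, Function.update_of_ne (by simp [hj, Fin.ext_iff, hne])]
      · show (if h' : m < T then (Function.update W j b) ⟨m, h'⟩ else false)
            = (if h' : m < T then W ⟨m, h'⟩ else false)
        rw [dif_neg h, dif_neg h]
    have hAu : ∀ (W : Fin T → Bool) (b : Bool), A (Function.update W j b) = A W :=
      fun W b => hins Ev.S (con_append_S Z) W b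
    have hBu : ∀ (W : Fin T → Bool) (b : Bool), B (Function.update W j b) = B W :=
      fun W b => hins Ev.F (con_append_F Z) W b
    have step1 : ∑ W : Fin T → Bool, (∏ i, ber q (W i)) * coinE σ φ (Dof W) (k+1) Z
        = σ Z * (∑ W : Fin T → Bool, (∏ i, ber q (W i)) * (if W j then A W else B W))
          + (1 - σ Z) *
            (∑ W : Fin T → Bool, (∏ i, ber q (W i)) * coinE σ φ (Dof W) k (Z ++ [Ev.N])) := by
      rw [Finset.mul_sum, Finset.mul_sum, ← Finset.sum_add_distrib]
      apply Finset.sum_congr rfl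
      intro W _
      show (∏ i, ber q (W i)) * (σ Z * coinE σ φ (Dof W) k
          (Z ++ [if Dof W (con Z) then Ev.S else Ev.F]) + (1 - σ Z) * _) = _
      rw [hDj W]
      rcases hW : W j with _ | _ <;> simp only [hW, if_true, if_false, Bool.false_eq_true] <;>
        simp [hA, hB, hW] <;> ring
    rw [step1, split_sum j q A B hAu hBu,
      ← ih (Z ++ [Ev.S]) (by rw [con_append_S]; omega),
      ← ih (Z ++ [Ev.F]) (by rw [con_append_F]; omega),
      ← ih (Z ++ [Ev.N]) (by rw [con_append_N]; omega)]
    show chainE σ q φ (k+1) Z = _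
    simp only [chainE]

lemma key_mono (σ : Hist → ℝ) (hv : ValidStrat σ) (hm : MonotoneStrat σ)
    (φ : ℕ → ℝ) (hφ : Monotone φ) (t : ℕ) {q q' : ℝ}
    (h0 : 0 ≤ q) (hqq : q ≤ q') (h1 : q' ≤ 1) :
    chainE σ q φ t [] ≤ chainE σ q' φ t [] := by
  rw [chainE_eq_coin σ φ q t t [] (by rw [con_nil]; omega),
    chainE_eq_coin σ φ q' t t [] (by rw [con_nil]; omega)]
  apply bern_mono t (fun W => coinE σ φ (Dof W) t []) _ q q' h0 hqq h1
  intro W W' hWW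
  apply coinE_mono hv hm hφ t [] [] (Dof W) (Dof W') rfl (compat_nil _) (compat_nil _) _ le_rfl
  intro m hmm
  simp only [Dof] at hmm ⊢
  by_cases h : m < t
  · rw [dif_pos h] at hmm ⊢
    exact hWW _ hmm
  · rw [dif_neg h] at hmm
    exact absurd hmm (by simp)

lemma exAnteFrom_nonneg {σ0 : Hist → ℝ} (hv : ValidStrat σ0) :
    ∀ (L pre : Hist), 0 ≤ exAnteFrom σ0 pre L := by
  intro L
  induction L with
  | nil => intro pre; exact zero_le_one
  | cons v L ih =>
    intro pre
    obtain ⟨h0, h1⟩ := hv pre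
    show 0 ≤ (if v = Ev.N then 1 - σ0 pre else σ0 pre) * exAnteFrom σ0 (pre ++ [v]) L
    apply mul_nonneg _ (ih _)
    by_cases h : v = Ev.N <;> simp [h] <;> linarith

lemma histProb_nonneg {σ0 : Hist → ℝ} (hv : ValidStrat σ0) {qq : ℝ}
    (h0 : 0 ≤ qq) (h1 : qq ≤ 1) (Z : Hist) : 0 ≤ histProb σ0 qq Z :=
  mul_nonneg (mul_nonneg (exAnteFrom_nonneg hv Z []) (pow_nonneg h0 _))
    (pow_nonneg (by linarith) _)

lemma E_mono (σ0 : Hist → ℝ) (hv : ValidStrat σ0) (hm : MonotoneStrat σ0)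
    (φ : ℕ → ℝ) (hφ : Monotone φ) (t : ℕ) {q q' : ℝ}
    (h0 : 0 ≤ q) (hqq : q ≤ q') (h1 : q' ≤ 1) :
    ∑ z : Fin t → Ev, φ (con (List.ofFn z)) * histProb σ0 q (List.ofFn z)
      ≤ ∑ z : Fin t → Ev, φ (con (List.ofFn z)) * histProb σ0 q' (List.ofFn z) := by
  have e1 : ∀ qq : ℝ, ∑ z : Fin t → Ev, φ (con (List.ofFn z)) * histProb σ0 qq (List.ofFn z)
      = chainE σ0 qq φ t [] := by
    intro qq
    rw [← chainE_eq_sum σ0 qq φ t []]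
    apply Finset.sum_congr rfl
    intro z _
    rw [List.nil_append]
    rfl
  rw [e1 q, e1 q']
  exact key_mono σ0 hv hm φ hφ t h0 hqq h1

@[to_additive]
lemma prod_split2 {ι : Type*} [DecidableEq ι] [Fintype ι] {M : Type*} [CommMonoid M] (a : ι)
    (g : ι → M) : ∏ i, g i = g a * ∏ i : {i : ι // i ≠ a}, g i := by
  rw [Fintype.prod_eq_mul_prod_compl a]
  congr 1
  have h := Finset.prod_subtype (p := fun i : ι => i ≠ a) (F := inferInstance) ({a}ᶜ)
    (fun x => by simp) g
  exact h

lemma esymm_at' {ι κ : Type*} [DecidableEq ι] (a : ι) (z : κ) (r : {i : ι // i ≠ a} → κ) :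
    ((Equiv.funSplitAt a κ).symm (z, r)) a = z := by
  simp [Equiv.funSplitAt_symm_apply]

lemma esymm_ne' {ι κ : Type*} [DecidableEq ι] (a : ι) (z : κ) (r : {i : ι // i ≠ a} → κ)
    {i : ι} (h : i ≠ a) : ((Equiv.funSplitAt a κ).symm (z, r)) i = r ⟨i, h⟩ := by
  simp [Equiv.funSplitAt_symm_apply, h]

lemma esum2 {ι : Type*} [DecidableEq ι] [Fintype ι] {κ : Type*} [Fintype κ] (a : ι)
    (F : (ι → κ) → ℝ) :
    ∑ Z : ι → κ, F Z = ∑ z : κ, ∑ r : {i : ι // i ≠ a} → κ,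
      F ((Equiv.funSplitAt a κ).symm (z, r)) := by
  rw [← (Equiv.funSplitAt a κ).symm.sum_comp F, Fintype.sum_prod_type]

theorem total_consumption_tail_monotone' (n t : ℕ) (σ : Fin n → Hist → ℝ)
    (hval : ∀ j, ValidStrat (σ j)) (hmono : ∀ j, MonotoneStrat (σ j)) (x : ℕ) :
    MonotoneOn
      (fun q : ℝ => ∑ Z : Fin n → Fin t → Ev,
        if x ≤ ∑ j, con (List.ofFn (Z j)) then
          ∏ j, histProb (σ j) q (List.ofFn (Z j))
        else 0)
      (Set.Icc (0 : ℝ) 1) := by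
  intro q hq q' hq' hqq
  obtain ⟨hq0, hq1⟩ := hq
  obtain ⟨hq0', hq1'⟩ := hq'
  set P : (Fin n → ℝ) → ℝ := fun r => ∑ Z : Fin n → Fin t → Ev,
    if x ≤ ∑ j, con (List.ofFn (Z j)) then
      ∏ j, histProb (σ j) (r j) (List.ofFn (Z j)) else 0 with hP
  show P (fun _ => q) ≤ P (fun _ => q')
  -- the one-coordinate step
  have ONE : ∀ (r : Fin n → ℝ), (∀ j, 0 ≤ r j ∧ r j ≤ 1) → ∀ a : Fin n,
      P (Function.update r a q) ≤ P (Function.update r a q') := by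
    intro r hr a
    have expand : ∀ y : ℝ, P (Function.update r a y)
        = ∑ rest : {i : Fin n // i ≠ a} → Fin t → Ev,
            (∑ z : Fin t → Ev,
              (if x ≤ con (List.ofFn z) +
                  ∑ j : {i : Fin n // i ≠ a}, con (List.ofFn (rest j)) then (1:ℝ) else 0) *
                histProb (σ a) y (List.ofFn z)) *
              ∏ j : {i : Fin n // i ≠ a}, histProb (σ j.1) (r j.1) (List.ofFn (rest j)) := by
      intro y
      show (∑ Z : Fin n → Fin t → Ev, if x ≤ ∑ j, con (List.ofFn (Z j)) then
          ∏ j, histProb (σ j) (Function.update r a y j) (List.ofFn (Z j)) else 0) = _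
      rw [esum2 a, Finset.sum_comm]
      apply Finset.sum_congr rfl
      intro rest _
      rw [Finset.sum_mul]
      apply Finset.sum_congr rfl
      intro z _
      have hc : ∑ j, con (List.ofFn (((Equiv.funSplitAt a (Fin t → Ev)).symm (z, rest)) j))
          = con (List.ofFn z) + ∑ j : {i : Fin n // i ≠ a}, con (List.ofFn (rest j)) := by
        rw [sum_split2 a]
        congr 1
        · rw [esymm_at']
        · apply Finset.sum_congr rfl
          intro i _
          rw [esymm_ne' a z rest i.2, Subtype.coe_eta]
      have hp : ∏ j, histProb (σ j) (Function.update r a y j)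
            (List.ofFn (((Equiv.funSplitAt a (Fin t → Ev)).symm (z, rest)) j))
          = histProb (σ a) y (List.ofFn z) *
              ∏ j : {i : Fin n // i ≠ a}, histProb (σ j.1) (r j.1) (List.ofFn (rest j)) := by
        rw [prod_split2 a]
        congr 1
        · rw [esymm_at', Function.update_self]
        · apply Finset.prod_congr rfl
          intro i _
          rw [esymm_ne' a z rest i.2, Subtype.coe_eta, Function.update_of_ne i.2]
      rw [hc, hp]
      by_cases hcond : x ≤ con (List.ofFn z) +
          ∑ j : {i : Fin n // i ≠ a}, con (List.ofFn (rest j)) <;>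
        simp [hcond, mul_assoc]
    rw [expand q, expand q']
    apply Finset.sum_le_sum
    intro rest _
    apply mul_le_mul_of_nonneg_right
    · apply E_mono (σ a) (hval a) (hmono a)
        (fun m => if x ≤ m + ∑ j : {i : Fin n // i ≠ a}, con (List.ofFn (rest j))
          then (1:ℝ) else 0) _ t hq0 hqq hq1'
      intro m1 m2 hm
      dsimp only
      split_ifs with h1 h2 <;> norm_num <;> omega
    · exact Finset.prod_nonneg fun i _ =>
        histProb_nonneg (hval i.1) (hr i.1).1 (hr i.1).2 _
  -- telescoping over a finset of customers
  have TEL : ∀ s : Finset (Fin n), P (fun _ => q) ≤ P (fun j => if j ∈ s then q' else q) := by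
    intro s
    induction s using Finset.induction_on with
    | empty => simp
    | @insert a s ha ih =>
      have e1 : (fun j => if j ∈ insert a s then q' else q)
          = Function.update (fun j => if j ∈ s then q' else q) a q' := by
        funext j
        by_cases h : j = a
        · subst h; simp [Function.update_self, ha]
        · rw [Function.update_of_ne h]
          simp [Finset.mem_insert, h]
      have e2 : (fun j => if j ∈ s then q' else q)
          = Function.update (fun j => if j ∈ s then q' else q) a q := by
        funext j
        by_cases h : j = a
        · subst h; simp [Function.update_self, ha]
        · rw [Function.update_of_ne h]
      calc P (fun _ => q) ≤ P (fun j => if j ∈ s then q' else q) := ih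
        _ = P (Function.update (fun j => if j ∈ s then q' else q) a q) := by rw [← e2]
        _ ≤ P (Function.update (fun j => if j ∈ s then q' else q) a q') := by
            apply ONE
            intro j
            by_cases h : j ∈ s <;> simp [h] <;> constructor <;> linarith
        _ = P (fun j => if j ∈ insert a s then q' else q) := by rw [← e1]
  have := TEL Finset.univ
  simpa using this

/-- with `n` independent customers, each with a monotone partiality
strategy, the probability that total consumption is at least `x` is
non-decreasing in the common quality `q ∈ [0,1]`. -/
theorem total_consumption_tail_monotone (n t : ℕ) (σ : Fin n → Hist → ℝ)
    (hval : ∀ j, ValidStrat (σ j)) (hmono : ∀ j, MonotoneStrat (σ j)) (x : ℕ) :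
    MonotoneOn
      (fun q : ℝ => ∑ Z : Fin n → Fin t → Ev,
        if x ≤ ∑ j, con (List.ofFn (Z j)) then
          ∏ j, histProb (σ j) q (List.ofFn (Z j))
        else 0)
      (Set.Icc (0 : ℝ) 1) := by
  exact total_consumption_tail_monotone' n t σ hval hmono x
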